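/- Let m ≤ n be positive integers. Then the m×(n,m,m) triple (F_{mn}, 0_m, 0_m) is rigid with respect to feedback similarity, and every m×(n,m,m) triple that is rigid with respect to feedback similarity is feedback similar to (F_{mn}, 0_m, 0_m). -/

import Mathlib

open Matrix

/-- An `m×(n,m)` pair: a pair `(B, A)` with `B ∈ ℂ^{m×n}` and `A ∈ ℂ^{m×m}`. -/
abbrev PairT (m n : ℕ) :=
  Matrix (Fin m) (Fin n) ℂ × Matrix (Fin m) (Fin m) ℂ

/-- Feedback similarity of `m×(n,m)` pairs: `(B,A)` and `(B',A')` are feedback similar if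
`B' = S⁻¹BP` and `A' = S⁻¹(AS + BU)` for some invertible `S, P` and some `U`. -/
def FSP {m n : ℕ} (X Y : PairT m n) : Prop :=
  ∃ (S : Matrix (Fin m) (Fin m) ℂ) (P : Matrix (Fin n) (Fin n) ℂ)
    (U : Matrix (Fin n) (Fin m) ℂ),
    IsUnit S ∧ IsUnit P ∧ Y.1 = S⁻¹ * X.1 * P ∧ Y.2 = S⁻¹ * (X.2 * S + X.1 * U)

/-- An `m×(n,m,m)` triple: a triple `(C, B, A)` with `C ∈ ℂ^{m×n}` and `B, A ∈ ℂ^{m×m}`. -/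
abbrev TripleT (m n : ℕ) :=
  Matrix (Fin m) (Fin n) ℂ × Matrix (Fin m) (Fin m) ℂ × Matrix (Fin m) (Fin m) ℂ

/-- Feedback similarity of `m×(n,m,m)` triples: `(C,B,A)` and `(C',B',A')` are feedback
similar if `C' = S⁻¹CP`, `B' = S⁻¹(BS + CV)`, `A' = S⁻¹(AS + CU)` for some invertible
`S, P` and some `U, V`. -/
def FST {m n : ℕ} (X Y : TripleT m n) : Prop :=
  ∃ (S : Matrix (Fin m) (Fin m) ℂ) (P : Matrix (Fin n) (Fin n) ℂ)
    (U V : Matrix (Fin n) (Fin m) ℂ),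
    IsUnit S ∧ IsUnit P ∧ Y.1 = S⁻¹ * X.1 * P ∧
    Y.2.1 = S⁻¹ * (X.2.1 * S + X.1 * V) ∧ Y.2.2 = S⁻¹ * (X.2.2 * S + X.1 * U)

/-- Frobenius norm of a complex matrix. -/
noncomputable def fnorm {p q : ℕ} (M : Matrix (Fin p) (Fin q) ℂ) : ℝ :=
  Real.sqrt (∑ i, ∑ j, ‖M i j‖ ^ 2)

/-- Norm of a pair: `‖(B,A)‖ = ‖B‖ + ‖A‖`. -/
noncomputable def pnorm {m n : ℕ} (X : PairT m n) : ℝ := fnorm X.1 + fnorm X.2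

/-- Norm of a triple: `‖(C,B,A)‖ = ‖C‖ + ‖B‖ + ‖A‖`. -/
noncomputable def tnorm {m n : ℕ} (X : TripleT m n) : ℝ :=
  fnorm X.1 + fnorm X.2.1 + fnorm X.2.2

/-- `F_{mn} = [I_m 0_{m,n-m}]` (for `m ≤ n`), entrywise: entry 1 iff `i = j`. -/
def Fmat (m n : ℕ) : Matrix (Fin m) (Fin n) ℂ := fun i j =>
  if (i:ℕ) = (j:ℕ) then 1 else 0

/-- A triple is rigid with respect to feedback similarity if all triples in some
`ε`-neighbourhood of it are feedback similar to it. -/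
def RigidT {m n : ℕ} (X : TripleT m n) : Prop :=
  ∃ ε : ℝ, 0 < ε ∧ ∀ Y : TripleT m n, tnorm (Y - X) < ε → FST Y X

/-! If `F D = 1`, every triple `(C, B, A)` with `C D` invertible is feedback similar to
`(F, 0, 0)`: with `S = C D` and `G = S⁻¹ C`, the unipotent shear `P = 1 - D (G - F)` carries `G`
onto `F` (as `(G - F) D = 0`), and feedback through the right inverse `D` cancels `B` and `A`.
Invertibility of `C D` is an open condition, whence rigidity of `(F, 0, 0)`; and it holds for
`C + t F` for all but finitely many `t` (the spectrum of `-C D` is finite), so a rigid triple is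
similar to a nearby triple of that form. For `F = F_{mn}` take `D = F_{mn}ᵀ`. -/

namespace FST

variable {m n : ℕ}

lemma symm {X Y : TripleT m n} (h : FST X Y) : FST Y X := by
  obtain ⟨S, P, U, V, hS, hP, h1, h2, h3⟩ := h
  have := hS.invertible
  have := hP.invertible
  refine ⟨S⁻¹, P⁻¹, -(P⁻¹ * (U * S⁻¹)), -(P⁻¹ * (V * S⁻¹)),
    isUnit_nonsing_inv_iff.mpr hS, isUnit_nonsing_inv_iff.mpr hP, ?_, ?_, ?_⟩ <;>
  simp only [h1, h2, h3, inv_inv_of_invertible, Matrix.mul_add, Matrix.add_mul, Matrix.mul_neg,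
    Matrix.mul_assoc, mul_inv_cancel_left_of_invertible, mul_inv_of_invertible,
    Matrix.mul_one, add_neg_cancel_right]

lemma trans {X Y Z : TripleT m n} (hXY : FST X Y) (hYZ : FST Y Z) : FST X Z := by
  obtain ⟨S₁, P₁, U₁, V₁, hS₁, hP₁, e₁, e₂, e₃⟩ := hXY
  obtain ⟨S₂, P₂, U₂, V₂, hS₂, hP₂, f₁, f₂, f₃⟩ := hYZ
  refine ⟨S₁ * S₂, P₁ * P₂, U₁ * S₂ + P₁ * U₂, V₁ * S₂ + P₁ * V₂,
    hS₁.mul hS₂, hP₁.mul hP₂, ?_, ?_, ?_⟩ <;>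
  simp only [f₁, f₂, f₃, e₁, e₂, e₃, Matrix.mul_inv_rev, Matrix.mul_add, Matrix.add_mul,
    Matrix.mul_assoc] <;>
  abel

end FST

section NormalForm

variable {m n : ℕ}

lemma fst_of_isUnit_mul {F C : Matrix (Fin m) (Fin n) ℂ} {D : Matrix (Fin n) (Fin m) ℂ}
    (hFD : F * D = 1) (hCD : IsUnit (C * D)) (B A : Matrix (Fin m) (Fin m) ℂ) :
    FST (C, B, A) (F, 0, 0) := by
  have := hCD.invertible
  have hGD : (C * D)⁻¹ * C * D = 1 := by rw [Matrix.mul_assoc, inv_mul_of_invertible]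
  have hN : IsNilpotent (D * ((C * D)⁻¹ * C - F)) := ⟨2, by
    rw [pow_two, Matrix.mul_assoc, ← Matrix.mul_assoc _ D, Matrix.sub_mul, hGD, hFD, sub_self,
      Matrix.zero_mul, Matrix.mul_zero]⟩
  have hkill (W : Matrix (Fin m) (Fin m) ℂ) :
      W * (C * D) + C * -(D * ((C * D)⁻¹ * (W * (C * D)))) = 0 := by
    rw [Matrix.mul_neg, ← Matrix.mul_assoc C, mul_inv_cancel_left_of_invertible, add_neg_cancel]
  refine ⟨C * D, 1 - D * ((C * D)⁻¹ * C - F), -(D * ((C * D)⁻¹ * (A * (C * D)))),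
    -(D * ((C * D)⁻¹ * (B * (C * D)))), hCD, hN.isUnit_one_sub, ?_, ?_, ?_⟩
  · rw [Matrix.mul_sub, Matrix.mul_one, ← Matrix.mul_assoc, hGD, Matrix.one_mul, sub_sub_cancel]
  · rw [hkill, Matrix.mul_zero]
  · rw [hkill, Matrix.mul_zero]

lemma Fmat_mul_transpose (hmn : m ≤ n) : Fmat m n * (Fmat m n)ᵀ = 1 := by
  ext i j
  rw [Matrix.mul_apply, Finset.sum_eq_single (Fin.castLE hmn j)]
  · simp [Fmat, Matrix.one_apply, Fin.ext_iff]
  · intro k _ hk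
    have hjk : (j : ℕ) ≠ k := fun h => hk (Fin.ext h.symm)
    simp [Fmat, hjk]
  · simp

end NormalForm

section Frobenius

attribute [local instance] Matrix.frobeniusNormedAddCommGroup Matrix.frobeniusNormSMulClass

variable {p q : ℕ}

lemma fnorm_eq_norm (M : Matrix (Fin p) (Fin q) ℂ) : fnorm M = ‖M‖ := by
  simp only [fnorm, Matrix.frobenius_norm_def, Real.sqrt_eq_rpow, Real.rpow_two]

lemma fnorm_nonneg (M : Matrix (Fin p) (Fin q) ℂ) : 0 ≤ fnorm M :=
  fnorm_eq_norm M ▸ norm_nonneg M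

lemma fnorm_zero : fnorm (0 : Matrix (Fin p) (Fin q) ℂ) = 0 :=
  fnorm_eq_norm _ ▸ norm_zero

lemma fnorm_smul (t : ℂ) (M : Matrix (Fin p) (Fin q) ℂ) :
    fnorm (t • M) = ‖t‖ * fnorm M := by
  simp only [fnorm_eq_norm, norm_smul]

lemma exists_fnorm_sub_lt_isUnit_mul {C : Matrix (Fin p) (Fin q) ℂ}
    {D : Matrix (Fin q) (Fin p) ℂ} (hCD : IsUnit (C * D)) :
    ∃ ε > 0, ∀ C' : Matrix (Fin p) (Fin q) ℂ, fnorm (C' - C) < ε → IsUnit (C' * D) := by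
  have hopen : IsOpen {C' : Matrix (Fin p) (Fin q) ℂ | IsUnit (C' * D)} := by
    simp only [Matrix.isUnit_iff_isUnit_det, isUnit_iff_ne_zero]
    exact isOpen_ne_fun (continuous_id.matrix_mul continuous_const).matrix_det continuous_const
  obtain ⟨ε, hε, hball⟩ := Metric.isOpen_iff.mp hopen C hCD
  refine ⟨ε, hε, fun C' hC' => hball ?_⟩
  rwa [Metric.mem_ball, dist_eq_norm, ← fnorm_eq_norm]

end Frobenius

section Rigidity

open Topology

variable {m n : ℕ}

lemma fnorm_fst_sub_le_tnorm_sub (X Y : TripleT m n) : fnorm (Y.1 - X.1) ≤ tnorm (Y - X) := by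
  rw [tnorm, Prod.fst_sub]
  linarith [fnorm_nonneg (Y - X).2.1, fnorm_nonneg (Y - X).2.2]

lemma tnorm_mk_zero_zero (C : Matrix (Fin m) (Fin n) ℂ) :
    tnorm ((C, 0, 0) : TripleT m n) = fnorm C := by
  simp [tnorm, fnorm_zero]

lemma rigidT_of_mul_eq_one {F : Matrix (Fin m) (Fin n) ℂ} {D : Matrix (Fin n) (Fin m) ℂ}
    (hFD : F * D = 1) : RigidT ((F, 0, 0) : TripleT m n) := by
  obtain ⟨ε, hε, hnear⟩ := exists_fnorm_sub_lt_isUnit_mul (C := F) (D := D) (by simp [hFD])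
  refine ⟨ε, hε, ?_⟩
  rintro ⟨C, B, A⟩ hY
  have hC : fnorm (C - F) < ε := (fnorm_fst_sub_le_tnorm_sub (F, 0, 0) (C, B, A)).trans_lt hY
  exact fst_of_isUnit_mul hFD (hnear C hC) B A

lemma exists_norm_lt_isUnit_add_smul_one {ι : Type*} [Fintype ι] [DecidableEq ι]
    (M : Matrix ι ι ℂ) {δ : ℝ} (hδ : 0 < δ) :
    ∃ t : ℂ, ‖t‖ < δ ∧ IsUnit (M + t • 1) := by
  have hspec : (spectrum ℂ (-M))ᶜ ∈ 𝓝[≠] (0 : ℂ) := by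
    simpa using mem_codiscreteWithin_iff_forall_mem_nhdsNE.mp
      (Matrix.finite_spectrum (-M)).compl_mem_codiscrete 0 trivial
  have hsmall : Metric.ball 0 δ ∈ 𝓝[≠] (0 : ℂ) :=
    mem_nhdsWithin_of_mem_nhds (Metric.ball_mem_nhds 0 hδ)
  obtain ⟨t, hts, htδ⟩ := Filter.nonempty_of_mem (Filter.inter_mem hspec hsmall)
  refine ⟨t, mem_ball_zero_iff.mp htδ, ?_⟩
  rw [Set.mem_compl_iff, spectrum.mem_iff, not_not, Algebra.algebraMap_eq_smul_one,
    sub_neg_eq_add] at hts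
  rwa [add_comm]

lemma fst_of_rigidT {F : Matrix (Fin m) (Fin n) ℂ} {D : Matrix (Fin n) (Fin m) ℂ}
    (hFD : F * D = 1) {T : TripleT m n} (hT : RigidT T) : FST T (F, 0, 0) := by
  obtain ⟨ε, hε, hrigid⟩ := hT
  obtain ⟨t, ht, hunit⟩ := exists_norm_lt_isUnit_add_smul_one (T.1 * D)
    (div_pos hε (by linarith [fnorm_nonneg F] : 0 < fnorm F + 1))
  let Y : TripleT m n := (T.1 + t • F, T.2.1, T.2.2)
  have hYT : FST Y T := by
    refine hrigid Y ?_
    have hdiff : Y - T = (t • F, 0, 0) := by ext <;> simp [Y]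
    rw [hdiff, tnorm_mk_zero_zero, fnorm_smul]
    rw [lt_div_iff₀ (by linarith [fnorm_nonneg F])] at ht
    nlinarith [norm_nonneg t]
  have hYF : FST Y (F, 0, 0) :=
    fst_of_isUnit_mul hFD (by rwa [Matrix.add_mul, Matrix.smul_mul, hFD]) _ _
  exact hYT.symm.trans hYF

end Rigidity

theorem stmt16_general (m n : ℕ) (hmn : m ≤ n) :
    RigidT ((Fmat m n, 0, 0) : TripleT m n) ∧
    ∀ T : TripleT m n, RigidT T → FST T (Fmat m n, 0, 0) :=
  ⟨rigidT_of_mul_eq_one (Fmat_mul_transpose hmn),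
    fun _ => fst_of_rigidT (Fmat_mul_transpose hmn)⟩

/-- for `m ≤ n`, the triple `(F_{mn}, 0_m, 0_m)` is rigid, and every
rigid `m×(n,m,m)` triple is feedback similar to it. -/
theorem stmt16 (m n : ℕ) (hm : 1 ≤ m) (hmn : m ≤ n) :
    RigidT ((Fmat m n, 0, 0) : TripleT m n) ∧
    ∀ T : TripleT m n, RigidT T → FST T (Fmat m n, 0, 0) :=
  stmt16_general m n hmn
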